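/- arXiv:1306.4397 — 2 statements merged into one kernel-verified Lean document; each statement's English description precedes it below -/
import Mathlib

section
/- Group-level thresholding identity under an orthonormal design: assume X^T X = I_p and let β̂^{ols} = X^T y. If β̂ is a minimizer of the LES objective Q and β̂_{kj} ≠ 0 for every j = 1, …, p_k in group k, then Σ_{j=1}^{p_k} |β̂_{kj}| = Σ_{j=1}^{p_k} |β̂^{ols}_{kj}| − nλα w_k. -/
/-!
At a minimiser, the objective restricted to a nonzero coordinate `(k, j)` is differentiable and
stationary. Orthonormality turns the least-squares part of that derivative into
`β̂ᵒˡˢ_kj - β̂_kj`, while the log-sum-exp penalty contributes `n λ α w_k sign(β̂_kj) π_j`, with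
softmax weights `π_j ≥ 0` summing to one. So `|β̂ᵒˡˢ_kj| = |β̂_kj| + n λ α w_k π_j`, and summing
over the group gives the identity.
-/

open Finset Function

noncomputable section

theorem IsMinOn.hasDerivAt_update_eq_zero {ι : Type*} [DecidableEq ι] {f : (ι → ℝ) → ℝ} {x : ι → ℝ}
    (hmin : IsMinOn f Set.univ x) (j : ι) {d : ℝ}
    (hd : HasDerivAt (fun t => f (update x j t)) d (x j)) : d = 0 := by
  refine IsLocalMin.hasDerivAt_eq_zero (Filter.Eventually.of_forall fun t => ?_) hd
  simpa only [update_eq_self] using isMinOn_univ_iff.mp hmin (update x j t)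

theorem abs_add_mul_sign {x c : ℝ} (hx : x ≠ 0) (hc : 0 ≤ c) :
    |x + c * SignType.sign x| = |x| + c := by
  rcases hx.lt_or_gt with hneg | hpos
  · rw [sign_neg hneg, SignType.coe_neg_one, abs_of_neg hneg, abs_of_neg (by linarith)]; ring
  · rw [sign_pos hpos, SignType.coe_one, abs_of_pos hpos, abs_of_pos (by linarith)]; ring

section LeastSquares

variable {m ι : Type*} [Fintype m] [Fintype ι] [DecidableEq ι]

def rss (X : m → ι → ℝ) (y : m → ℝ) (β : ι → ℝ) : ℝ :=
  ∑ i, (y i - ∑ j, X i j * β j) ^ 2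

theorem sum_mul_update (a β : ι → ℝ) (j : ι) (t : ℝ) :
    ∑ j', a j' * update β j t j' = ∑ j', a j' * β j' + a j * (t - β j) := by
  have h : (fun j' => a j' * update β j t j') = update (fun j' => a j' * β j') j (a j * t) := by
    ext j'; rcases eq_or_ne j' j with rfl | h <;> simp [*]
  rw [h, sum_update_of_mem (mem_univ j), ← add_sum_erase univ _ (mem_univ j),
    ← sdiff_singleton_eq_erase]
  ring

theorem hasDerivAt_rss_update (X : m → ι → ℝ) (y : m → ℝ) (β : ι → ℝ) (j : ι) :
    HasDerivAt (fun t => rss X y (update β j t))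
      (-2 * ∑ i, X i j * (y i - ∑ j', X i j' * β j')) (β j) := by
  simp only [rss, sum_mul_update, mul_sum]
  refine HasDerivAt.fun_sum fun i _ => ?_
  have h : HasDerivAt (fun t => y i - (∑ j', X i j' * β j' + X i j * (t - β j)))
      (-X i j) (β j) := by
    simpa using ((hasDerivAt_id _).sub_const (β j) |>.const_mul (X i j) |>.const_add
      (∑ j', X i j' * β j') |>.const_sub (y i))
  refine (h.fun_pow 2).congr_deriv ?_
  simp only [Nat.cast_ofNat, sub_self, mul_zero, add_zero, Nat.add_one_sub_one, pow_one, mul_neg,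
    neg_mul, neg_inj]
  ring

theorem sum_mul_residual_of_orthonormal (X : m → ι → ℝ) (y : m → ℝ)
    (horth : ∀ j j', ∑ i, X i j * X i j' = if j = j' then 1 else 0) (β : ι → ℝ) (j : ι) :
    ∑ i, X i j * (y i - ∑ j', X i j' * β j') = ∑ i, X i j * y i - β j := by
  simp only [mul_sub, sum_sub_distrib, mul_sum, ← mul_assoc]
  rw [sum_comm (f := fun i j' => X i j * X i j' * β j')]
  simp [← sum_mul, horth]

end LeastSquares

section LogSumExp

variable {ι : Type*} [Fintype ι]

def lseAbs (α : ℝ) (b : ι → ℝ) : ℝ :=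
  Real.log (∑ j, Real.exp (α * |b j|))

def absSoftmax (α : ℝ) (b : ι → ℝ) (j : ι) : ℝ :=
  Real.exp (α * |b j|) / ∑ j', Real.exp (α * |b j'|)

theorem absSoftmax_nonneg (α : ℝ) (b : ι → ℝ) (j : ι) : 0 ≤ absSoftmax α b j := by
  unfold absSoftmax; positivity

theorem sum_absSoftmax [Nonempty ι] (α : ℝ) (b : ι → ℝ) : ∑ j, absSoftmax α b j = 1 := by
  simp only [absSoftmax]
  rw [← sum_div, div_self (sum_pos (fun _ _ => Real.exp_pos _) univ_nonempty).ne']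

theorem hasDerivAt_lseAbs_update [DecidableEq ι] (α : ℝ) {b : ι → ℝ} {j : ι} (hb : b j ≠ 0) :
    HasDerivAt (fun t => lseAbs α (update b j t))
      (α * SignType.sign (b j) * absSoftmax α b j) (b j) := by
  set C := ∑ j' ∈ univ \ {j}, Real.exp (α * |b j'|) with hC
  have hsum : ∑ j', Real.exp (α * |b j'|) = Real.exp (α * |b j|) + C := by
    rw [hC, sdiff_singleton_eq_erase]
    exact (add_sum_erase _ _ (mem_univ j)).symm
  have hupd : ∀ t, lseAbs α (update b j t) = Real.log (Real.exp (α * |t|) + C) := fun t => by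
    rw [lseAbs, ← sum_update_of_mem (mem_univ j)]
    congr 1
    exact sum_congr rfl fun j' _ => apply_update (fun _ x => Real.exp (α * |x|)) b j t j'
  simp only [hupd]
  have hinner : HasDerivAt (fun t => Real.exp (α * |t|) + C)
      (Real.exp (α * |b j|) * (α * SignType.sign (b j))) (b j) :=
    (((hasDerivAt_abs hb).const_mul α).exp).add_const C
  refine (hinner.log (by positivity)).congr_deriv ?_
  rw [absSoftmax, hsum]; ring

end LogSumExp

section GroupPenalty

variable {κ : Type*} [Fintype κ] [DecidableEq κ] {G : κ → Type*} [∀ k, Fintype (G k)]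
  [∀ k, DecidableEq (G k)]

def groupPenalty (α : ℝ) (w : κ → ℝ) (β : (Σ k, G k) → ℝ) : ℝ :=
  ∑ l, w l * lseAbs α (fun j => β ⟨l, j⟩)

theorem hasDerivAt_groupPenalty_update (α : ℝ) (w : κ → ℝ) {β : (Σ k, G k) → ℝ} {k : κ}
    {j : G k} (hβ : β ⟨k, j⟩ ≠ 0) :
    HasDerivAt (fun t => groupPenalty α w (update β ⟨k, j⟩ t))
      (w k * (α * SignType.sign (β ⟨k, j⟩) * absSoftmax α (fun j' => β ⟨k, j'⟩) j))
      (β ⟨k, j⟩) := by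
  have hterm : ∀ l, HasDerivAt (fun t => w l * lseAbs α (fun j' => update β ⟨k, j⟩ t ⟨l, j'⟩))
      ((Pi.single k (w k * (α * SignType.sign (β ⟨k, j⟩) *
        absSoftmax α (fun j' => β ⟨k, j'⟩) j)) : κ → ℝ) l) (β ⟨k, j⟩) := by
    intro l
    rcases eq_or_ne l k with rfl | hl
    · simp only [update_comp_eq_of_injective' β sigma_mk_injective j, Pi.single_eq_same]
      exact (hasDerivAt_lseAbs_update α (b := fun i => β ⟨l, i⟩) hβ).const_mul (w l)
    · have hne : ∀ j' : G l, (⟨l, j'⟩ : Σ k, G k) ≠ ⟨k, j⟩ :=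
        fun j' h => hl (congrArg Sigma.fst h)
      simp only [update_comp_eq_of_forall_ne' β _ hne, Pi.single_eq_of_ne hl]
      exact hasDerivAt_const _ _
  simpa [groupPenalty] using HasDerivAt.fun_sum (u := univ) fun l _ => hterm l

def lesObjective (n : ℕ) (X : Fin n → (Σ k, G k) → ℝ) (y : Fin n → ℝ) (lam α : ℝ) (w : κ → ℝ)
    (β : (Σ k, G k) → ℝ) : ℝ :=
  1 / (2 * (n : ℝ)) * rss X y β + lam * groupPenalty α w β

theorem IsMinOn.sum_mul_residual_eq_of_lesObjective {n : ℕ} (hn : 0 < n)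
    {X : Fin n → (Σ k, G k) → ℝ} {y : Fin n → ℝ} {lam α : ℝ} {w : κ → ℝ} {β : (Σ k, G k) → ℝ}
    (hmin : IsMinOn (lesObjective n X y lam α w) Set.univ β) {k : κ} {j : G k}
    (hβ : β ⟨k, j⟩ ≠ 0) :
    ∑ i, X i ⟨k, j⟩ * (y i - ∑ j', X i j' * β j') =
      n * lam * α * w k * absSoftmax α (fun j' => β ⟨k, j'⟩) j * SignType.sign (β ⟨k, j⟩) := by
  have hstat := hmin.hasDerivAt_update_eq_zero ⟨k, j⟩
    (((hasDerivAt_rss_update X y β _).const_mul _).add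
      ((hasDerivAt_groupPenalty_update α w hβ).const_mul lam))
  have hn' : (0 : ℝ) < n := Nat.cast_pos.mpr hn
  field_simp at hstat
  linarith

end GroupPenalty

end

theorem les_group_threshold_general (n K : ℕ) (hn : 0 < n)
    (p : Fin K → ℕ) (hp : ∀ k, 1 ≤ p k)
    (X : Fin n → (Σ k : Fin K, Fin (p k)) → ℝ) (y : Fin n → ℝ)
    (horth : ∀ j j' : Σ k : Fin K, Fin (p k),
      ∑ i : Fin n, X i j * X i j' = if j = j' then 1 else 0)
    (βols : (Σ k : Fin K, Fin (p k)) → ℝ)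
    (hols : ∀ j : Σ k : Fin K, Fin (p k), βols j = ∑ i : Fin n, X i j * y i)
    (lam α : ℝ) (hlam : 0 < lam) (hα : 0 < α)
    (w : Fin K → ℝ) (hw : ∀ k, 0 ≤ w k)
    (βh : (Σ k : Fin K, Fin (p k)) → ℝ)
    (hmin : IsMinOn
      (fun β : (Σ k : Fin K, Fin (p k)) → ℝ =>
        (1 / (2 * (n : ℝ))) * ∑ i : Fin n, (y i - ∑ j' : Σ k : Fin K, Fin (p k), X i j' * β j') ^ 2
          + lam * ∑ l : Fin K, w l * Real.log (∑ j' : Fin (p l), Real.exp (α * |β ⟨l, j'⟩|)))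
      Set.univ βh)
    (k : Fin K) (hne : ∀ j : Fin (p k), βh ⟨k, j⟩ ≠ 0) :
    ∑ j : Fin (p k), |βh ⟨k, j⟩| =
      (∑ j : Fin (p k), |βols ⟨k, j⟩|) - (n : ℝ) * lam * α * w k := by
  have hmin' : IsMinOn (lesObjective n X y lam α w) Set.univ βh := hmin
  set π := absSoftmax α (fun j => βh ⟨k, j⟩)
  have hcoord : ∀ j, |βols ⟨k, j⟩| = |βh ⟨k, j⟩| + n * lam * α * w k * π j := by
    intro j
    have hstat := hmin'.sum_mul_residual_eq_of_lesObjective hn (hne j)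
    rw [sum_mul_residual_of_orthonormal X y horth, ← hols] at hstat
    rw [show βols ⟨k, j⟩ = βh ⟨k, j⟩ + n * lam * α * w k * π j * SignType.sign (βh ⟨k, j⟩) by
      linarith, abs_add_mul_sign (hne j)]
    exact mul_nonneg (by have := hw k; positivity) (absSoftmax_nonneg _ _ _)
  have : Nonempty (Fin (p k)) := Fin.pos_iff_nonempty.mp (hp k)
  rw [sum_congr rfl fun j _ => hcoord j, sum_add_distrib, ← mul_sum, sum_absSoftmax]
  ring

/-- **Group-level thresholding identity under an orthonormal design.**
Assume `XᵀX = I` and let `β̂ᵒˡˢ = Xᵀ y`.  If `β̂` is a minimizer of the LES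
objective `Q` and `β̂ kj ≠ 0` for every `j` in group `k`, then
`∑ j, |β̂ kj| = ∑ j, |β̂ᵒˡˢ kj| - n λ α w k`. -/
theorem les_group_threshold (n K : ℕ) (hn : 0 < n) (hK : 0 < K)
    (p : Fin K → ℕ) (hp : ∀ k, 1 ≤ p k)
    (X : Fin n → (Σ k : Fin K, Fin (p k)) → ℝ) (y : Fin n → ℝ)
    (horth : ∀ j j' : Σ k : Fin K, Fin (p k),
      ∑ i : Fin n, X i j * X i j' = if j = j' then 1 else 0)
    (βols : (Σ k : Fin K, Fin (p k)) → ℝ)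
    (hols : ∀ j : Σ k : Fin K, Fin (p k), βols j = ∑ i : Fin n, X i j * y i)
    (lam α : ℝ) (hlam : 0 < lam) (hα : 0 < α)
    (w : Fin K → ℝ) (hw : ∀ k, 0 ≤ w k)
    (βh : (Σ k : Fin K, Fin (p k)) → ℝ)
    (hmin : IsMinOn
      (fun β : (Σ k : Fin K, Fin (p k)) → ℝ =>
        (1 / (2 * (n : ℝ))) * ∑ i : Fin n, (y i - ∑ j' : Σ k : Fin K, Fin (p k), X i j' * β j') ^ 2
          + lam * ∑ l : Fin K, w l * Real.log (∑ j' : Fin (p l), Real.exp (α * |β ⟨l, j'⟩|)))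
      Set.univ βh)
    (k : Fin K) (hne : ∀ j : Fin (p k), βh ⟨k, j⟩ ≠ 0) :
    ∑ j : Fin (p k), |βh ⟨k, j⟩| =
      (∑ j : Fin (p k), |βols ⟨k, j⟩|) - (n : ℝ) * lam * α * w k :=
  les_group_threshold_general n K hn p hp X y horth βols hols lam α hlam hα w hw βh hmin k hne
end

section
/- L1-loss bound (deterministic core of Theorem 1, inequality (18)): assume y = Xβ* + ε with (2/n)·max_{k,j} |X_{kj}^T ε| ≤ λα, let s = |G(β*)|, and assume the REgroup(κ, s) hypothesis holds. Then every minimizer β̂ of Q satisfies ‖β̂ − β*‖₁ ≤ 16 s λα / κ². -/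
/-!
Write `Δ = β̂ - β*`. Comparing `Q β̂ ≤ Q β*` and bounding the cross term `εᵀ X Δ` by the noise
hypothesis gives the basic inequality
`‖X Δ‖² ≤ n λ α (∑_{k ∈ G} (1 + 2 p_k) ‖Δ_k‖₁ - ∑_{k ∉ G} ‖Δ_k‖₁)`.
The penalty enters through two properties of log-sum-exp: it is `α`-Lipschitz for `‖·‖₁` on the
active groups, and on an inactive group (where `β*_k = 0`) Jensen's inequality for `exp` gives
`p_k log ∑_j exp (α |Δ_kj|) ≥ p_k log p_k + α ‖Δ_k‖₁`, which is exactly the penalty at `β*` plus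
`α ‖Δ_k‖₁`. So `Δ` lies in the cone of the REgroup condition, which bounds the weighted mass
`S = ∑_{k ∈ G} p_k (1 + p_k)² ‖Δ_k‖₂²` by `4 ‖X Δ‖² / (κ² n)`. Cauchy–Schwarz inside and
across the `s` active groups bounds `‖Δ‖₁` by `2 √(s S)`, and together these give
`κ² √S ≤ 8 λ α √s`.
-/

open Finset Real Matrix

lemma Real.log_sum_exp_le_log_sum_exp_add {ι : Type*} [Fintype ι] {a b : ι → ℝ} {c : ℝ}
    (hc : 0 ≤ c) (hab : ∀ i, a i ≤ b i + c) :
    log (∑ i, exp (a i)) ≤ log (∑ i, exp (b i)) + c := by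
  cases isEmpty_or_nonempty ι
  · simpa using hc
  have hb : 0 < ∑ i, exp (b i) := sum_pos (fun i _ => exp_pos _) univ_nonempty
  calc log (∑ i, exp (a i)) ≤ log (exp c * ∑ i, exp (b i)) := by
        refine log_le_log (sum_pos (fun i _ => exp_pos _) univ_nonempty) ?_
        rw [mul_sum]
        gcongr with i
        rw [← exp_add]
        exact exp_le_exp.2 (by linarith [hab i])
    _ = log (∑ i, exp (b i)) + c := by rw [log_mul (exp_ne_zero c) hb.ne', log_exp, add_comm]

lemma Real.card_mul_log_card_add_sum_le {ι : Type*} [Fintype ι] (x : ι → ℝ) :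
    Fintype.card ι * log (Fintype.card ι) + ∑ i, x i ≤
      Fintype.card ι * log (∑ i, exp (x i)) := by
  cases isEmpty_or_nonempty ι
  · simp
  set m : ℝ := (Fintype.card ι : ℝ)
  have hm : 0 < m := by positivity
  have jensen : exp (m⁻¹ * ∑ i, x i) ≤ m⁻¹ * ∑ i, exp (x i) := by
    simpa [← smul_eq_mul, ← smul_sum, m] using
      convexOn_exp.map_sum_le (t := univ) (w := fun _ => m⁻¹) (p := x)
        (fun _ _ => by positivity) (by simp [m]) (fun _ _ => Set.mem_univ _)
  have hlog := log_le_log (exp_pos _) jensen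
  rw [log_exp, log_mul (inv_ne_zero hm.ne') (by positivity), log_inv] at hlog
  have := mul_le_mul_of_nonneg_left hlog hm.le
  rw [mul_inv_cancel_left₀ hm.ne'] at this
  linarith

lemma Real.log_sum_exp_mul_abs_le {ι : Type*} [Fintype ι] {α : ℝ} (hα : 0 ≤ α) (a b : ι → ℝ) :
    log (∑ i, exp (α * |a i|)) ≤ log (∑ i, exp (α * |b i|)) + α * ∑ i, |b i - a i| := by
  refine log_sum_exp_le_log_sum_exp_add (by positivity) fun i => ?_
  have hi : |b i - a i| ≤ ∑ i, |b i - a i| :=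
    single_le_sum (f := fun i => |b i - a i|) (fun _ _ => abs_nonneg _) (mem_univ i)
  have : |a i| ≤ |b i| + |b i - a i| := by simpa using abs_sub (b i) (b i - a i)
  nlinarith

lemma Matrix.dotProduct_le_mul_sum_abs {ι : Type*} [Fintype ι] {v w : ι → ℝ} {t : ℝ}
    (hv : ∀ i, |v i| ≤ t) : v ⬝ᵥ w ≤ t * ∑ i, |w i| := by
  rw [dotProduct, mul_sum]
  refine sum_le_sum fun i _ => ?_
  calc v i * w i ≤ |v i| * |w i| := by rw [← abs_mul]; exact le_abs_self _
    _ ≤ t * |w i| := by gcongr; exact hv i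

lemma sum_sq_mulVec_sub_le_of_isMinOn {m ι : Type*} [Fintype m] [Fintype ι]
    {X : Matrix m ι ℝ} {β₀ β : ι → ℝ} {ε y : m → ℝ} {c : ℝ} {pen : (ι → ℝ) → ℝ} (hc : 0 < c)
    (hy : ∀ i, y i = (X *ᵥ β₀) i + ε i)
    (hmin : IsMinOn (fun b => c * ∑ i, (y i - (X *ᵥ b) i) ^ 2 + pen b) Set.univ β) :
    ∑ i, (X *ᵥ (β - β₀)) i ^ 2 ≤ 2 * (Xᵀ *ᵥ ε) ⬝ᵥ (β - β₀) + (pen β₀ - pen β) / c := by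
  have hres : ∑ i, (y i - (X *ᵥ β) i) ^ 2 = ∑ i, (y i - (X *ᵥ β₀) i) ^ 2
      - 2 * ε ⬝ᵥ X *ᵥ (β - β₀) + ∑ i, (X *ᵥ (β - β₀)) i ^ 2 := by
    rw [dotProduct, mul_sum, ← sum_sub_distrib, ← sum_add_distrib]
    refine sum_congr rfl fun i _ => ?_
    rw [hy, mulVec_sub, Pi.sub_apply]
    ring
  have h := isMinOn_iff.1 hmin β₀ (Set.mem_univ _)
  simp only [hres] at h
  rw [mulVec_transpose, ← dotProduct_mulVec, ← sub_le_iff_le_add', le_div_iff₀' hc]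
  linarith

lemma l1_error_le_of_basic_inequality {t κ n F A B L S s : ℝ} (ht : 0 < t) (hκ : 0 < κ)
    (hn : 0 < n) (hF : 0 ≤ F) (hB : 0 ≤ B) (hL : 0 ≤ L) (hS : 0 ≤ S) (hs : 0 ≤ s)
    (hbasic : F ≤ n * t * (A - B)) (hRE : B ≤ A → κ * √n * √S ≤ 2 * √F)
    (hCS : A + L ≤ 2 * (√s * √S)) :
    L + B ≤ 16 * s * t / κ ^ 2 := by
  have hcone : B ≤ A := sub_nonneg.1 (nonneg_of_mul_nonneg_right (hF.trans hbasic) (by positivity))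
  have hRE2 : κ ^ 2 * n * S ≤ 4 * F := by
    have := mul_self_le_mul_self (by positivity) (hRE hcone)
    rw [mul_mul_mul_comm, mul_mul_mul_comm _ (√n), mul_self_sqrt hn.le, mul_self_sqrt hS,
      mul_mul_mul_comm, mul_self_sqrt hF] at this
    linarith
  have hroot : κ ^ 2 * √S ≤ 8 * t * √s := by
    rcases (sqrt_nonneg S).eq_or_lt with h | h
    · rw [← h, mul_zero]; positivity
    refine le_of_mul_le_mul_right ?_ (mul_pos hn h)
    calc κ ^ 2 * √S * (n * √S) = κ ^ 2 * n * S := by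
          linear_combination κ ^ 2 * n * mul_self_sqrt hS
      _ ≤ n * t * (4 * (A - B)) := by linarith
      _ ≤ n * t * (8 * (√s * √S)) := mul_le_mul_of_nonneg_left (by linarith) (by positivity)
      _ = 8 * t * √s * (n * √S) := by ring
  rw [le_div_iff₀ (by positivity)]
  nlinarith [sq_sqrt hs, sqrt_nonneg s]

section Groups

variable {ι : Type*} {p : ι → ℕ}

def groupL1 (Δ : (Σ k, Fin (p k)) → ℝ) (k : ι) : ℝ := ∑ j, |Δ ⟨k, j⟩|

def groupSqNorm (Δ : (Σ k, Fin (p k)) → ℝ) (k : ι) : ℝ := ∑ j, Δ ⟨k, j⟩ ^ 2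

noncomputable def lesPenalty [Fintype ι] (α : ℝ) (β : (Σ k, Fin (p k)) → ℝ) : ℝ :=
  ∑ k, (p k : ℝ) * log (∑ j, exp (α * |β ⟨k, j⟩|))

lemma groupL1_nonneg (Δ : (Σ k, Fin (p k)) → ℝ) (k : ι) : 0 ≤ groupL1 Δ k :=
  sum_nonneg fun _ _ => abs_nonneg _

lemma sum_abs_eq_sum_groupL1 [Fintype ι] (Δ : (Σ k, Fin (p k)) → ℝ) :
    ∑ j, |Δ j| = ∑ k, groupL1 Δ k :=
  Fintype.sum_sigma _

lemma lesPenalty_sub_le [Fintype ι] [DecidableEq ι] {α : ℝ} (hα : 0 ≤ α) {G : Finset ι}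
    {β₀ : (Σ k, Fin (p k)) → ℝ} (hβ₀ : ∀ k ∉ G, ∀ j, β₀ ⟨k, j⟩ = 0) (β : (Σ k, Fin (p k)) → ℝ) :
    lesPenalty α β₀ - lesPenalty α β ≤
      α * (∑ k ∈ G, p k * groupL1 (β - β₀) k - ∑ k ∈ Gᶜ, groupL1 (β - β₀) k) := by
  rw [lesPenalty, lesPenalty, ← sum_sub_distrib, ← sum_add_sum_compl G, mul_sub, mul_sum, mul_sum,
    sub_eq_add_neg, ← sum_neg_distrib]
  gcongr with k hk k hk
  · rw [← mul_sub, mul_left_comm]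
    gcongr
    have := log_sum_exp_mul_abs_le hα (fun j => β₀ ⟨k, j⟩) (fun j => β ⟨k, j⟩)
    simp only [groupL1, Pi.sub_apply]
    linarith
  · have hzero := hβ₀ k (mem_compl.1 hk)
    have hcard : ∑ j : Fin (p k), exp (α * |β₀ ⟨k, j⟩|) = p k := by simp [hzero]
    have := card_mul_log_card_add_sum_le fun j => α * |β ⟨k, j⟩|
    simp only [Fintype.card_fin, ← mul_sum] at this
    rw [hcard]
    simp only [groupL1, Pi.sub_apply, hzero, sub_zero]
    linarith

lemma sum_one_add_mul_groupL1_le (G : Finset ι) (Δ : (Σ k, Fin (p k)) → ℝ) :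
    ∑ k ∈ G, (1 + p k) * groupL1 Δ k ≤
      √(#G) * √(∑ k ∈ G, p k * (1 + p k) ^ 2 * groupSqNorm Δ k) := by
  have hgroup : ∀ k, ((1 + p k) * groupL1 Δ k) ^ 2 ≤ p k * (1 + p k) ^ 2 * groupSqNorm Δ k := by
    intro k
    have := sq_sum_le_card_mul_sum_sq (s := univ) (f := fun j : Fin (p k) => |Δ ⟨k, j⟩|)
    simp only [card_univ, Fintype.card_fin, sq_abs] at this
    rw [mul_pow, groupL1, groupSqNorm]
    nlinarith [sq_nonneg (1 + (p k : ℝ))]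
  calc ∑ k ∈ G, (1 + p k) * groupL1 Δ k = ∑ k ∈ G, 1 * ((1 + p k) * groupL1 Δ k) := by simp
    _ ≤ √(∑ k ∈ G, 1 ^ 2) * √(∑ k ∈ G, ((1 + p k) * groupL1 Δ k) ^ 2) :=
      sum_mul_le_sqrt_mul_sqrt _ _ _
    _ ≤ √(#G) * √(∑ k ∈ G, p k * (1 + p k) ^ 2 * groupSqNorm Δ k) := by
      simp only [one_pow, sum_const, nsmul_eq_mul, mul_one]
      gcongr with k
      exact hgroup k

lemma les_basic_inequality [Fintype ι] [DecidableEq ι] {m : Type*} [Fintype m]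
    {X : Matrix m (Σ k, Fin (p k)) ℝ} {β₀ β : (Σ k, Fin (p k)) → ℝ} {ε y : m → ℝ}
    {n lam α : ℝ} {G : Finset ι} (hn : 0 < n) (hlam : 0 ≤ lam) (hα : 0 ≤ α)
    (hy : ∀ i, y i = (X *ᵥ β₀) i + ε i) (hnoise : ∀ j, 2 / n * |(Xᵀ *ᵥ ε) j| ≤ lam * α)
    (hβ₀ : ∀ k ∉ G, ∀ j, β₀ ⟨k, j⟩ = 0)
    (hmin : IsMinOn (fun b => 1 / (2 * n) * ∑ i, (y i - (X *ᵥ b) i) ^ 2 + lam * lesPenalty α b)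
      Set.univ β) :
    ∑ i, (X *ᵥ (β - β₀)) i ^ 2 ≤ n * (lam * α) *
      (∑ k ∈ G, (1 + 2 * p k) * groupL1 (β - β₀) k - ∑ k ∈ Gᶜ, groupL1 (β - β₀) k) := by
  have hls := sum_sq_mulVec_sub_le_of_isMinOn (pen := fun b => lam * lesPenalty α b)
    (by positivity) hy hmin
  have hnoise' : ∀ j, |(Xᵀ *ᵥ ε) j| ≤ n * (lam * α) / 2 := fun j => by
    have := hnoise j
    rw [div_mul_eq_mul_div, div_le_iff₀ hn] at this
    linarith
  have hE := dotProduct_le_mul_sum_abs (w := β - β₀) hnoise'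
  rw [sum_abs_eq_sum_groupL1, ← sum_add_sum_compl G] at hE
  have hP := mul_le_mul_of_nonneg_left (lesPenalty_sub_le hα hβ₀ β) hlam
  rw [div_eq_mul_inv, one_div, inv_inv] at hls
  have hsplit : ∑ k ∈ G, (1 + 2 * p k) * groupL1 (β - β₀) k =
      ∑ k ∈ G, groupL1 (β - β₀) k + 2 * ∑ k ∈ G, p k * groupL1 (β - β₀) k := by
    simp only [add_mul, one_mul, sum_add_distrib, mul_sum, mul_assoc]
  rw [hsplit]
  linear_combination hls + 2 * hE + (2 * n) * hP

end Groups

theorem les_l1_bound_general (n K : ℕ) (hn : 0 < n)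
    (p : Fin K → ℕ)
    (X : Fin n → (Σ k : Fin K, Fin (p k)) → ℝ)
    (βstar : (Σ k : Fin K, Fin (p k)) → ℝ) (ε y : Fin n → ℝ)
    (hmodel : ∀ i, y i = (∑ j : Σ k : Fin K, Fin (p k), X i j * βstar j) + ε i)
    (lam α : ℝ) (hlam : 0 < lam) (hα : 0 < α)
    (hnoise : ∀ j : Σ k : Fin K, Fin (p k),
      (2 / (n : ℝ)) * |∑ i : Fin n, X i j * ε i| ≤ lam * α)
    (G : Finset (Fin K)) (hG : ∀ k, k ∈ G ↔ ∃ j : Fin (p k), βstar ⟨k, j⟩ ≠ 0)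
    (s : ℕ) (hs : s = G.card)
    (κ : ℝ) (hκ : 0 < κ)
    (hRE : ∀ G' : Finset (Fin K), G'.card ≤ s →
      ∀ Δ : (Σ k : Fin K, Fin (p k)) → ℝ, Δ ≠ 0 →
      (∑ k ∈ G'ᶜ, ∑ j : Fin (p k), |Δ ⟨k, j⟩|) ≤
        (∑ k ∈ G', (1 + 2 * (p k : ℝ)) * ∑ j : Fin (p k), |Δ ⟨k, j⟩|) →
      κ * Real.sqrt (n : ℝ) *
          Real.sqrt (∑ k ∈ G', (p k : ℝ) * (1 + (p k : ℝ)) ^ 2 * ∑ j : Fin (p k), (Δ ⟨k, j⟩) ^ 2) ≤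
        2 * Real.sqrt (∑ i : Fin n, (∑ j : Σ k : Fin K, Fin (p k), X i j * Δ j) ^ 2))
    (βh : (Σ k : Fin K, Fin (p k)) → ℝ)
    (hmin : IsMinOn
      (fun β : (Σ k : Fin K, Fin (p k)) → ℝ =>
        (1 / (2 * (n : ℝ))) * ∑ i : Fin n, (y i - ∑ j : Σ k : Fin K, Fin (p k), X i j * β j) ^ 2
          + lam * ∑ k : Fin K, (p k : ℝ) * Real.log (∑ j : Fin (p k), Real.exp (α * |β ⟨k, j⟩|)))
      Set.univ βh) :
    ∑ j : Σ k : Fin K, Fin (p k), |βh j - βstar j| ≤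
      16 * (s : ℝ) * (lam * α) / κ ^ 2 := by
  have hn' : (0 : ℝ) < n := by exact_mod_cast hn
  have hsupp : ∀ k ∉ G, ∀ j, βstar ⟨k, j⟩ = 0 := fun k hk j => by
    by_contra h
    exact hk ((hG k).2 ⟨j, h⟩)
  set Δ := βh - βstar
  have hbasic := les_basic_inequality (X := X) hn' hlam.le hα.le hmodel hnoise hsupp hmin
  have hRE' : ∑ k ∈ Gᶜ, groupL1 Δ k ≤ ∑ k ∈ G, (1 + 2 * p k) * groupL1 Δ k →
      κ * √n * √(∑ k ∈ G, p k * (1 + p k) ^ 2 * groupSqNorm Δ k) ≤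
        2 * √(∑ i, (X *ᵥ Δ) i ^ 2) := fun hcone => by
    by_cases hΔ0 : Δ = 0
    · simp [hΔ0, groupSqNorm]
    · exact hRE G hs.ge Δ hΔ0 hcone
  have hCS := sum_one_add_mul_groupL1_le G Δ
  have hsum : ∑ k ∈ G, (1 + 2 * p k) * groupL1 Δ k + ∑ k ∈ G, groupL1 Δ k =
      2 * ∑ k ∈ G, (1 + p k) * groupL1 Δ k := by
    rw [mul_sum, ← sum_add_distrib]
    exact sum_congr rfl fun _ _ => by ring
  show ∑ j, |Δ j| ≤ _
  rw [sum_abs_eq_sum_groupL1, ← sum_add_sum_compl G]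
  refine l1_error_le_of_basic_inequality (mul_pos hlam hα) hκ hn'
    (sum_nonneg fun _ _ => sq_nonneg _)
    (sum_nonneg fun _ _ => groupL1_nonneg _ _) (sum_nonneg fun _ _ => groupL1_nonneg _ _)
    (sum_nonneg fun _ _ => by unfold groupSqNorm; positivity) (Nat.cast_nonneg s) hbasic hRE' ?_
  rw [hsum, hs]
  linarith

/-- **L1-loss bound** (deterministic core of Theorem 1, inequality (18)).
Assume `y = X β* + ε` with `(2/n) max_{k,j} |X kjᵀ ε| ≤ λ α`, let
`s = |G(β*)|`, and assume the REgroup(κ, s) hypothesis.  Then every minimizer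
`β̂` of `Q` (with weights `w k = p k`) satisfies
`‖β̂ - β*‖₁ ≤ 16 s λ α / κ²`. -/
theorem les_l1_bound (n K : ℕ) (hn : 0 < n) (hK : 0 < K)
    (p : Fin K → ℕ) (hp : ∀ k, 1 ≤ p k)
    (X : Fin n → (Σ k : Fin K, Fin (p k)) → ℝ)
    (βstar : (Σ k : Fin K, Fin (p k)) → ℝ) (ε y : Fin n → ℝ)
    (hmodel : ∀ i, y i = (∑ j : Σ k : Fin K, Fin (p k), X i j * βstar j) + ε i)
    (lam α : ℝ) (hlam : 0 < lam) (hα : 0 < α)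
    (hnoise : ∀ j : Σ k : Fin K, Fin (p k),
      (2 / (n : ℝ)) * |∑ i : Fin n, X i j * ε i| ≤ lam * α)
    (G : Finset (Fin K)) (hG : ∀ k, k ∈ G ↔ ∃ j : Fin (p k), βstar ⟨k, j⟩ ≠ 0)
    (s : ℕ) (hs : s = G.card)
    (κ : ℝ) (hκ : 0 < κ)
    (hRE : ∀ G' : Finset (Fin K), G'.card ≤ s →
      ∀ Δ : (Σ k : Fin K, Fin (p k)) → ℝ, Δ ≠ 0 →
      (∑ k ∈ G'ᶜ, ∑ j : Fin (p k), |Δ ⟨k, j⟩|) ≤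
        (∑ k ∈ G', (1 + 2 * (p k : ℝ)) * ∑ j : Fin (p k), |Δ ⟨k, j⟩|) →
      κ * Real.sqrt (n : ℝ) *
          Real.sqrt (∑ k ∈ G', (p k : ℝ) * (1 + (p k : ℝ)) ^ 2 * ∑ j : Fin (p k), (Δ ⟨k, j⟩) ^ 2) ≤
        2 * Real.sqrt (∑ i : Fin n, (∑ j : Σ k : Fin K, Fin (p k), X i j * Δ j) ^ 2))
    (βh : (Σ k : Fin K, Fin (p k)) → ℝ)
    (hmin : IsMinOn
      (fun β : (Σ k : Fin K, Fin (p k)) → ℝ =>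
        (1 / (2 * (n : ℝ))) * ∑ i : Fin n, (y i - ∑ j : Σ k : Fin K, Fin (p k), X i j * β j) ^ 2
          + lam * ∑ k : Fin K, (p k : ℝ) * Real.log (∑ j : Fin (p k), Real.exp (α * |β ⟨k, j⟩|)))
      Set.univ βh) :
    ∑ j : Σ k : Fin K, Fin (p k), |βh j - βstar j| ≤
      16 * (s : ℝ) * (lam * α) / κ ^ 2 :=
  les_l1_bound_general n K hn p X βstar ε y hmodel lam α hlam hα hnoise G hG s hs κ hκ hRE βh hmin
end
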